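/- Dual cone of the set of copy-correlated k-undistillable states: let k ≥ 1 and let X be a Hermitian matrix on ℋ = ℂ^d⊗ℂ^d belonging to the dual cone T_k*. Then there exist a Hermitian matrix Y on ℋ^{⊗k} in the dual cone of the set of states on ℋ^{⊗k} that are single-copy undistillable across the cut grouping all A-factors against all B-factors, and a Hermitian matrix Q on ℋ^{⊗k} in the dual cone of the set of permutation-symmetric states on ℋ^{⊗k}, such that X ⊗ I^{⊗(k−1)} = Y + Q. -/

import Mathlib

/-!
Take `Y = Ŝ(X ⊗ I)` and `Q = X ⊗ I - Y`. Symmetrization is self-adjoint for the trace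
pairing, so `tr[Y ω] = tr[(X ⊗ I) Ŝ(ω)] = tr[X ρ]`, where `ρ` is the one-copy reduction of
`Ŝ(ω)`. Single-copy undistillability survives local relabelings and convex mixtures, so for an
undistillable state `ω` the state `Ŝ(ω)` is a permutation-symmetric undistillable extension of
`ρ`; hence `ρ ∈ T_k` and `tr[Y ω] ≥ 0`. A permutation-symmetric `τ` is fixed by `Ŝ`, so
`tr[Q τ] = 0`.
-/

open scoped BigOperators ComplexOrder
open Matrix MeasureTheory

noncomputable section

/-- A quantum state: a positive semidefinite complex matrix of unit trace. -/
def IsState {n : Type} [Fintype n] (M : Matrix n n ℂ) : Prop :=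
  M.PosSemidef ∧ M.trace = 1

/-- Kronecker product of rectangular complex matrices. -/
def kron {I J K L : Type} (A : Matrix I J ℂ) (B : Matrix K L ℂ) :
    Matrix (I × K) (J × L) ℂ :=
  Matrix.of fun p q => A p.1 q.1 * B p.2 q.2

/-- The projector onto the maximally entangled vector `(1/√D) ∑ᵢ |i,i⟩`. -/
def phiD (D : ℕ) : Matrix (Fin D × Fin D) (Fin D × Fin D) ℂ :=
  Matrix.of fun p q => if p.1 = p.2 ∧ q.1 = q.2 then (1 / (D : ℂ)) else 0

/-- Single-copy undistillability (trace form):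
`tr[(A ⊗ B) ω (A ⊗ B)† (φ₂ − I₄/2)] ≤ 0` for all 2 × m matrices A, B. -/
def SingleCopyUndistillable {I : Type} [Fintype I] [DecidableEq I]
    (ω : Matrix (I × I) (I × I) ℂ) : Prop :=
  ∀ A B : Matrix (Fin 2) I ℂ,
    (Matrix.trace (kron A B * ω * (kron A B)ᴴ * (phiD 2 - (1 / 2 : ℂ) • 1))).re ≤ 0

/-- The SLOCC `D`-dimensional singlet fraction. -/
def singletFraction (D : ℕ) {I : Type} [Fintype I] [DecidableEq I]
    (ω : Matrix (I × I) (I × I) ℂ) : ℝ :=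
  sSup {r : ℝ | ∃ A B : Matrix (Fin D) I ℂ,
    Matrix.trace (kron A B * ω * (kron A B)ᴴ) ≠ 0 ∧
    r = (Matrix.trace (kron A B * ω * (kron A B)ᴴ * phiD D)).re /
        (Matrix.trace (kron A B * ω * (kron A B)ᴴ)).re}

/-- Single-copy undistillability, singlet-fraction form: `F₂(ω) = 1/2`. -/
def SingleCopyUndistillableF {I : Type} [Fintype I] [DecidableEq I]
    (ω : Matrix (I × I) (I × I) ℂ) : Prop :=
  singletFraction 2 ω = 1 / 2

/-- `n`-fold tensor power of a bipartite state, with all A-factors grouped on one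
side and all B-factors on the other. -/
def tensorPow {ι : Type} [Fintype ι] (ρ : Matrix (ι × ι) (ι × ι) ℂ) (n : ℕ) :
    Matrix ((Fin n → ι) × (Fin n → ι)) ((Fin n → ι) × (Fin n → ι)) ℂ :=
  Matrix.of fun x y => ∏ i : Fin n, ρ (x.1 i, x.2 i) (y.1 i, y.2 i)

/-- Permutation symmetry of a state on `ℋ^{⊗k}`: `P_π ω P_π = ω` for every `π ∈ S_k`,
expressed entrywise. -/
def PermSymmetric {ι : Type} {k : ℕ}
    (ω : Matrix ((Fin k → ι) × (Fin k → ι)) ((Fin k → ι) × (Fin k → ι)) ℂ) : Prop :=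
  ∀ (π : Equiv.Perm (Fin k)) x y,
    ω (x.1 ∘ π, x.2 ∘ π) (y.1 ∘ π, y.2 ∘ π) = ω x y

def fillAt {ι : Type} {k : ℕ} (m : Fin k) (a : ι)
    (r : {i : Fin k // i ≠ m} → ι) : Fin k → ι :=
  fun i => if h : i = m then a else r ⟨i, h⟩

/-- Partial trace over all bipartite factors except the `m`-th one. -/
def reduceAt {ι : Type} [Fintype ι] {k : ℕ} (m : Fin k)
    (ω : Matrix ((Fin k → ι) × (Fin k → ι)) ((Fin k → ι) × (Fin k → ι)) ℂ) :
    Matrix (ι × ι) (ι × ι) ℂ :=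
  Matrix.of fun p q =>
    ∑ rA : {i : Fin k // i ≠ m} → ι, ∑ rB : {i : Fin k // i ≠ m} → ι,
      ω (fillAt m p.1 rA, fillAt m p.2 rB) (fillAt m q.1 rA, fillAt m q.2 rB)

/-- Copy-correlated `k`-undistillability (trace form of single-copy undistillability):
there is a permutation-symmetric single-copy-undistillable extension on `ℋ^{⊗k}`
whose reduction to the first bipartite factor is `ρ`. -/
def CopyCorrKUndistillable (ι : Type) [Fintype ι] [DecidableEq ι] (k : ℕ) (hk : 0 < k)
    (ρ : Matrix (ι × ι) (ι × ι) ℂ) : Prop :=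
  ∃ ω : Matrix ((Fin k → ι) × (Fin k → ι)) ((Fin k → ι) × (Fin k → ι)) ℂ,
    IsState ω ∧ PermSymmetric ω ∧ SingleCopyUndistillable ω ∧
      reduceAt (⟨0, hk⟩ : Fin k) ω = ρ

/-- Copy-correlated `k`-undistillability (singlet-fraction form). -/
def CopyCorrKUndistillableF (ι : Type) [Fintype ι] [DecidableEq ι] (k : ℕ) (hk : 0 < k)
    (ρ : Matrix (ι × ι) (ι × ι) ℂ) : Prop :=
  ∃ ω : Matrix ((Fin k → ι) × (Fin k → ι)) ((Fin k → ι) × (Fin k → ι)) ℂ,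
    IsState ω ∧ PermSymmetric ω ∧ SingleCopyUndistillableF ω ∧
      reduceAt (⟨0, hk⟩ : Fin k) ω = ρ

/-- Dual cone of a set of matrices, inside the Hermitian matrices. -/
def dualCone {n : Type} [Fintype n] (M : Set (Matrix n n ℂ)) : Set (Matrix n n ℂ) :=
  {X | X.IsHermitian ∧ ∀ ρ ∈ M, 0 ≤ (Matrix.trace (X * ρ)).re}

/-- Separability: membership in the closed convex hull of the product states. -/
def SeparableState {ι : Type} [Fintype ι] (σ : Matrix (ι × ι) (ι × ι) ℂ) : Prop :=
  σ ∈ closure (convexHull ℝ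
    {M : Matrix (ι × ι) (ι × ι) ℂ | ∃ α β : Matrix ι ι ℂ,
      IsState α ∧ IsState β ∧ M = kron α β})

/-- Trace norm `‖X‖₁ = tr √(X†X)`. -/
def traceNorm {n : Type} [Fintype n] [DecidableEq n] (X : Matrix n n ℂ) : ℝ :=
  (((Matrix.posSemidef_conjTranspose_mul_self X).1.eigenvectorUnitary : Matrix n n ℂ) *
    Matrix.diagonal (fun i => ((√((Matrix.posSemidef_conjTranspose_mul_self X).1.eigenvalues i)
      : ℝ) : ℂ)) *
    (star (Matrix.posSemidef_conjTranspose_mul_self X).1.eigenvectorUnitary :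
      Matrix n n ℂ)).trace.re

/-- Symmetrization `Ŝ_k(Q) = (1/k!) ∑_{π ∈ S_k} P_π Q P_π`. -/
def symmetrize {ι : Type} {k : ℕ}
    (Q : Matrix ((Fin k → ι) × (Fin k → ι)) ((Fin k → ι) × (Fin k → ι)) ℂ) :
    Matrix ((Fin k → ι) × (Fin k → ι)) ((Fin k → ι) × (Fin k → ι)) ℂ :=
  (1 / (Nat.factorial k : ℂ)) •
    ∑ π : Equiv.Perm (Fin k),
      Matrix.of fun x y => Q (x.1 ∘ π, x.2 ∘ π) (y.1 ∘ π, y.2 ∘ π)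


instance matMeasurableSpace {m n : Type} [Fintype m] [Fintype n] :
    MeasurableSpace (Matrix m n ℂ) := borel _

/-- Partial trace over the last `n − k` bipartite factors. -/
def traceTail {ι : Type} [Fintype ι] {n k : ℕ} (h : k ≤ n)
    (ω : Matrix ((Fin n → ι) × (Fin n → ι)) ((Fin n → ι) × (Fin n → ι)) ℂ) :
    Matrix ((Fin k → ι) × (Fin k → ι)) ((Fin k → ι) × (Fin k → ι)) ℂ :=
  Matrix.of fun x y =>
    ∑ tA : Fin (n - k) → ι, ∑ tB : Fin (n - k) → ι,
      ω (fun i => Fin.append x.1 tA (Fin.cast (by omega) i),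
         fun i => Fin.append x.2 tB (Fin.cast (by omega) i))
        (fun i => Fin.append y.1 tA (Fin.cast (by omega) i),
         fun i => Fin.append y.2 tB (Fin.cast (by omega) i))

/-- Partial trace over the last bipartite factor. -/
def traceLast {ι : Type} [Fintype ι] {k : ℕ}
    (ω : Matrix ((Fin (k + 1) → ι) × (Fin (k + 1) → ι))
      ((Fin (k + 1) → ι) × (Fin (k + 1) → ι)) ℂ) :
    Matrix ((Fin k → ι) × (Fin k → ι)) ((Fin k → ι) × (Fin k → ι)) ℂ :=
  Matrix.of fun x y => ∑ a : ι, ∑ b : ι,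
    ω (Fin.snoc x.1 a, Fin.snoc x.2 b) (Fin.snoc y.1 a, Fin.snoc y.2 b)

/-- `X ⊗ I^{⊗(k−1)}`: the operator acting as `X` on the first bipartite factor
and as the identity on the remaining `k − 1` factors. -/
def firstFactorOp {ι : Type} [DecidableEq ι] (k : ℕ) (hk : 0 < k)
    (X : Matrix (ι × ι) (ι × ι) ℂ) :
    Matrix ((Fin k → ι) × (Fin k → ι)) ((Fin k → ι) × (Fin k → ι)) ℂ :=
  Matrix.of fun x y =>
    X (x.1 ⟨0, hk⟩, x.2 ⟨0, hk⟩) (y.1 ⟨0, hk⟩, y.2 ⟨0, hk⟩) *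
      ∏ i : Fin k, if i = ⟨0, hk⟩ then 1
        else (if x.1 i = y.1 i ∧ x.2 i = y.2 i then 1 else 0)

/-- `⟨φ| ⊗ I₂` with `|φ⟩ = ∑ᵢ |i,i⟩` the unnormalized maximally entangled vector. -/
def jamA (d : ℕ) : Matrix (Fin 2) ((Fin d × Fin d) × Fin 2) ℂ :=
  Matrix.of fun s p => (if p.1.1 = p.1.2 then (1 : ℂ) else 0) * (if s = p.2 then 1 else 0)

/-- `σ ⊗ ρ` with tensor factors ordered as `((A₂A₁A₃), (B₂B₁B₃))`. -/
def jamState (d : ℕ) (σ : Matrix (Fin d × Fin d) (Fin d × Fin d) ℂ)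
    (ρ : Matrix ((Fin d × Fin 2) × (Fin d × Fin 2))
      ((Fin d × Fin 2) × (Fin d × Fin 2)) ℂ) :
    Matrix (((Fin d × Fin d) × Fin 2) × ((Fin d × Fin d) × Fin 2))
      (((Fin d × Fin d) × Fin 2) × ((Fin d × Fin d) × Fin 2)) ℂ :=
  Matrix.of fun x y =>
    σ (x.1.1.1, x.2.1.1) (y.1.1.1, y.2.1.1) *
      ρ ((x.1.1.2, x.1.2), (x.2.1.2, x.2.2)) ((y.1.1.2, y.1.2), (y.2.1.2, y.2.2))

/-- Joint operator `ρ ⊗ σ`, regrouped as a bipartite operator across the cut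
joining both A-parts against both B-parts. -/
def jointState {ι κ : Type} (ρ : Matrix (ι × ι) (ι × ι) ℂ)
    (σ : Matrix (κ × κ) (κ × κ) ℂ) :
    Matrix ((ι × κ) × (ι × κ)) ((ι × κ) × (ι × κ)) ℂ :=
  Matrix.of fun x y =>
    ρ (x.1.1, x.2.1) (y.1.1, y.2.1) * σ (x.1.2, x.2.2) (y.1.2, y.2.2)

open Kronecker

section Reindexing

variable {m n : Type*} [Fintype m] [Fintype n]

lemma Matrix.trace_submatrix_equiv (M : Matrix n n ℂ) (e : m ≃ n) :
    (M.submatrix e e).trace = M.trace :=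
  e.sum_comp M.diag

lemma Matrix.trace_submatrix_equiv_mul (M : Matrix n n ℂ) (N : Matrix m m ℂ) (e : m ≃ n) :
    (M.submatrix e e * N).trace = (M * N.submatrix e.symm e.symm).trace := by
  rw [← trace_submatrix_equiv (M * _) e, ← submatrix_mul_equiv _ _ _ e, submatrix_submatrix]
  simp

lemma Matrix.mul_submatrix_mul_conjTranspose {l : Type*} (K : Matrix l m ℂ) (M : Matrix n n ℂ)
    (e : m ≃ n) :
    K * M.submatrix e e * Kᴴ = K.submatrix id e.symm * M * (K.submatrix id e.symm)ᴴ := by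
  have hK : K = (K.submatrix id e.symm).submatrix id e := by simp
  conv_lhs => rw [hK]
  rw [conjTranspose_submatrix, submatrix_mul_equiv, submatrix_mul_equiv, submatrix_id_id]

end Reindexing

section PartialTrace

variable {α β : Type*} [Fintype β]

def partialTraceRight (τ : Matrix (α × β) (α × β) ℂ) : Matrix α α ℂ :=
  Matrix.of fun p q => ∑ r, τ (p, r) (q, r)

lemma trace_partialTraceRight [Fintype α] (τ : Matrix (α × β) (α × β) ℂ) :
    (partialTraceRight τ).trace = τ.trace := by
  simp [Matrix.trace, partialTraceRight, Fintype.sum_prod_type]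

lemma Matrix.PosSemidef.partialTraceRight {τ : Matrix (α × β) (α × β) ℂ} (hτ : τ.PosSemidef) :
    (_root_.partialTraceRight τ).PosSemidef := by
  have hsum : _root_.partialTraceRight τ = ∑ r, τ.submatrix (·, r) (·, r) := by
    ext p q
    simp [_root_.partialTraceRight, Matrix.sum_apply]
  rw [hsum]
  exact posSemidef_sum _ fun r _ => hτ.submatrix _

lemma trace_kronecker_one_mul [Fintype α] [DecidableEq β] (X : Matrix α α ℂ)
    (τ : Matrix (α × β) (α × β) ℂ) :
    ((X ⊗ₖ (1 : Matrix β β ℂ)) * τ).trace = (X * partialTraceRight τ).trace := by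
  simp only [Matrix.trace, Matrix.diag, Matrix.mul_apply, Fintype.sum_prod_type,
    Matrix.kroneckerMap_apply, Matrix.one_apply, mul_ite, mul_one, mul_zero, ite_mul, zero_mul,
    Finset.sum_ite_eq, Finset.mem_univ, if_true, partialTraceRight, Matrix.of_apply,
    Finset.mul_sum]
  exact Finset.sum_congr rfl fun _ _ => Finset.sum_comm

end PartialTrace

section Undistillability

variable {I J : Type}

lemma kron_submatrix_prodCongr {K L : Type} (A : Matrix K J ℂ) (B : Matrix L J ℂ)
    (e₁ e₂ : J ≃ I) :
    (kron A B).submatrix id (e₁.prodCongr e₂).symm =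
      kron (A.submatrix id e₁.symm) (B.submatrix id e₂.symm) :=
  rfl

variable [Fintype I] [DecidableEq I] [Fintype J] [DecidableEq J]

lemma SingleCopyUndistillable.submatrix_prodCongr {ω : Matrix (I × I) (I × I) ℂ}
    (hω : SingleCopyUndistillable ω) (e₁ e₂ : J ≃ I) :
    SingleCopyUndistillable (ω.submatrix (e₁.prodCongr e₂) (e₁.prodCongr e₂)) := by
  intro A B
  rw [mul_submatrix_mul_conjTranspose, kron_submatrix_prodCongr]
  exact hω _ _

lemma SingleCopyUndistillable.smul_sum {α : Type*} {s : Finset α}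
    {ω : α → Matrix (I × I) (I × I) ℂ} (hω : ∀ a ∈ s, SingleCopyUndistillable (ω a))
    {c : ℝ} (hc : 0 ≤ c) : SingleCopyUndistillable (c • ∑ a ∈ s, ω a) := by
  intro A B
  simp only [Matrix.mul_smul, Matrix.smul_mul, Matrix.mul_sum, Matrix.sum_mul, trace_smul,
    trace_sum, Complex.smul_re, Complex.re_sum, smul_eq_mul]
  exact mul_nonpos_of_nonneg_of_nonpos hc (Finset.sum_nonpos fun a ha => hω a ha A B)

end Undistillability

section Symmetrization

variable {ι : Type} {k : ℕ}

/-- The relabeling `(x, y) ↦ (x ∘ π, y ∘ π)` of `ℋ^{⊗k}` permuting the bipartite factors. -/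
def permFactors (π : Equiv.Perm (Fin k)) :
    (Fin k → ι) × (Fin k → ι) ≃ (Fin k → ι) × (Fin k → ι) :=
  (π.symm.arrowCongr (Equiv.refl ι)).prodCongr (π.symm.arrowCongr (Equiv.refl ι))

lemma permFactors_symm (π : Equiv.Perm (Fin k)) :
    (permFactors (ι := ι) π).symm = permFactors π⁻¹ :=
  rfl

lemma permSymmetric_iff (ω : Matrix ((Fin k → ι) × (Fin k → ι)) ((Fin k → ι) × (Fin k → ι)) ℂ) :
    PermSymmetric ω ↔ ∀ π, ω.submatrix (permFactors π) (permFactors π) = ω := by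
  simp only [PermSymmetric, ← Matrix.ext_iff]
  rfl

lemma permSymmetric_one [DecidableEq ι] :
    PermSymmetric (1 : Matrix ((Fin k → ι) × (Fin k → ι)) ((Fin k → ι) × (Fin k → ι)) ℂ) :=
  (permSymmetric_iff _).2 fun π => submatrix_one_equiv (permFactors π)

lemma symmetrize_eq_smul_sum
    (Q : Matrix ((Fin k → ι) × (Fin k → ι)) ((Fin k → ι) × (Fin k → ι)) ℂ) :
    symmetrize Q = (k.factorial : ℝ)⁻¹ • ∑ π, Q.submatrix (permFactors π) (permFactors π) := by
  rw [symmetrize, ← Complex.coe_smul]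
  push_cast
  simp only [one_div]
  rfl

lemma permSymmetric_symmetrize
    (ω : Matrix ((Fin k → ι) × (Fin k → ι)) ((Fin k → ι) × (Fin k → ι)) ℂ) :
    PermSymmetric (symmetrize ω) := by
  intro σ x y
  simp only [symmetrize, Matrix.smul_apply, Matrix.sum_apply, Matrix.of_apply]
  congr 1
  exact Fintype.sum_equiv (Equiv.mulLeft σ) _ _ fun π => rfl

lemma symmetrize_eq_self {τ : Matrix ((Fin k → ι) × (Fin k → ι)) ((Fin k → ι) × (Fin k → ι)) ℂ}
    (hτ : PermSymmetric τ) : symmetrize τ = τ := by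
  rw [symmetrize_eq_smul_sum]
  simp only [(permSymmetric_iff τ).1 hτ, Finset.sum_const, Finset.card_univ, Fintype.card_perm,
    Fintype.card_fin, ← Nat.cast_smul_eq_nsmul ℝ, smul_smul]
  rw [inv_mul_cancel₀ (by positivity), one_smul]

lemma Matrix.IsHermitian.symmetrize
    {M : Matrix ((Fin k → ι) × (Fin k → ι)) ((Fin k → ι) × (Fin k → ι)) ℂ}
    (hM : M.IsHermitian) : (_root_.symmetrize M).IsHermitian := by
  rw [symmetrize_eq_smul_sum]
  exact IsSelfAdjoint.smul (.all _) (isSelfAdjoint_sum _ fun π _ => hM.submatrix _)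

variable [Fintype ι]

lemma trace_symmetrize_mul
    (M N : Matrix ((Fin k → ι) × (Fin k → ι)) ((Fin k → ι) × (Fin k → ι)) ℂ) :
    (symmetrize M * N).trace = (M * symmetrize N).trace := by
  simp only [symmetrize_eq_smul_sum, Matrix.smul_mul, Matrix.mul_smul, trace_smul, Matrix.sum_mul,
    Matrix.mul_sum, trace_sum, trace_submatrix_equiv_mul, permFactors_symm]
  congr 1
  exact Fintype.sum_equiv (Equiv.inv _) _ _ fun π => rfl

variable [DecidableEq ι]

lemma trace_symmetrize
    (ω : Matrix ((Fin k → ι) × (Fin k → ι)) ((Fin k → ι) × (Fin k → ι)) ℂ) :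
    (symmetrize ω).trace = ω.trace := by
  simpa [symmetrize_eq_self permSymmetric_one] using (trace_symmetrize_mul 1 ω).symm

lemma IsState.symmetrize
    {ω : Matrix ((Fin k → ι) × (Fin k → ι)) ((Fin k → ι) × (Fin k → ι)) ℂ}
    (hω : IsState ω) : IsState (symmetrize ω) := by
  refine ⟨?_, by rw [trace_symmetrize, hω.2]⟩
  rw [symmetrize_eq_smul_sum]
  exact (posSemidef_sum _ fun π _ => hω.1.submatrix _).smul (by positivity)

lemma SingleCopyUndistillable.symmetrize
    {ω : Matrix ((Fin k → ι) × (Fin k → ι)) ((Fin k → ι) × (Fin k → ι)) ℂ}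
    (hω : SingleCopyUndistillable ω) : SingleCopyUndistillable (symmetrize ω) := by
  rw [symmetrize_eq_smul_sum]
  exact smul_sum (fun π _ => hω.submatrix_prodCongr _ _) (by positivity)

end Symmetrization

section Reduction

variable {ι : Type} {k : ℕ}

lemma fillAt_eq_funSplitAt_symm (m : Fin k) (a : ι) (r : {i : Fin k // i ≠ m} → ι) :
    fillAt m a r = (Equiv.funSplitAt m ι).symm (a, r) := by
  funext i
  by_cases hi : i = m
  · subst hi
    simp [fillAt]
  · simp [fillAt, hi]

def splitFactor (m : Fin k) :
    (Fin k → ι) × (Fin k → ι) ≃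
      (ι × ι) × (({i // i ≠ m} → ι) × ({i // i ≠ m} → ι)) :=
  ((Equiv.funSplitAt m ι).prodCongr (Equiv.funSplitAt m ι)).trans (Equiv.prodProdProdComm ..)

lemma reduceAt_eq_partialTraceRight [Fintype ι] (m : Fin k)
    (σ : Matrix ((Fin k → ι) × (Fin k → ι)) ((Fin k → ι) × (Fin k → ι)) ℂ) :
    reduceAt m σ =
      partialTraceRight (σ.submatrix (splitFactor m).symm (splitFactor m).symm) := by
  ext p q
  simp [reduceAt, partialTraceRight, splitFactor, Fintype.sum_prod_type,
    fillAt_eq_funSplitAt_symm]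

lemma IsState.reduceAt [Fintype ι]
    {ω : Matrix ((Fin k → ι) × (Fin k → ι)) ((Fin k → ι) × (Fin k → ι)) ℂ}
    (hω : IsState ω) (m : Fin k) : IsState (reduceAt m ω) := by
  rw [reduceAt_eq_partialTraceRight]
  exact ⟨(hω.1.submatrix _).partialTraceRight,
    by rw [trace_partialTraceRight, trace_submatrix_equiv, hω.2]⟩

lemma firstFactorOp_eq_submatrix [DecidableEq ι] (hk : 0 < k) (X : Matrix (ι × ι) (ι × ι) ℂ) :
    firstFactorOp k hk X =
      (X ⊗ₖ (1 : Matrix _ _ ℂ)).submatrix (splitFactor ⟨0, hk⟩) (splitFactor ⟨0, hk⟩) := by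
  ext x y
  have hprod : ∀ i : Fin k, (if i = ⟨0, hk⟩ then (1 : ℂ)
      else if x.1 i = y.1 i ∧ x.2 i = y.2 i then 1 else 0) =
      if i = ⟨0, hk⟩ ∨ (x.1 i = y.1 i ∧ x.2 i = y.2 i) then 1 else 0 := by
    intro i
    split_ifs <;> tauto
  simp only [firstFactorOp, Matrix.of_apply, hprod, Finset.prod_boole, Matrix.submatrix_apply,
    Matrix.kroneckerMap_apply, Matrix.one_apply]
  congr 2
  simp only [splitFactor, Equiv.trans_apply, Equiv.prodCongr_apply, Prod.map,
    Equiv.prodProdProdComm_apply, Equiv.funSplitAt_apply, Prod.mk.injEq, funext_iff,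
    Finset.mem_univ, true_implies, Subtype.forall, or_iff_not_imp_left, imp_and, forall_and]

lemma Matrix.IsHermitian.firstFactorOp [DecidableEq ι] (hk : 0 < k)
    {X : Matrix (ι × ι) (ι × ι) ℂ} (hX : X.IsHermitian) :
    (_root_.firstFactorOp k hk X).IsHermitian := by
  rw [firstFactorOp_eq_submatrix, IsHermitian, conjTranspose_submatrix, conjTranspose_kronecker,
    hX.eq, conjTranspose_one]

lemma trace_firstFactorOp_mul [Fintype ι] [DecidableEq ι] (hk : 0 < k)
    (X : Matrix (ι × ι) (ι × ι) ℂ)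
    (σ : Matrix ((Fin k → ι) × (Fin k → ι)) ((Fin k → ι) × (Fin k → ι)) ℂ) :
    (firstFactorOp k hk X * σ).trace = (X * reduceAt ⟨0, hk⟩ σ).trace := by
  rw [firstFactorOp_eq_submatrix, trace_submatrix_equiv_mul, trace_kronecker_one_mul,
    reduceAt_eq_partialTraceRight]

end Reduction

/-- **Lemma 4 (Dual cone of k-copy undistillable states).**
Every `X ∈ T_k*` satisfies `X ⊗ I^{⊗(k−1)} = Y + Q` with `Y` in the dual cone of
the single-copy undistillable states and `Q` in the dual cone of the
permutation-symmetric states on `ℋ^{⊗k}`. -/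
theorem dualCone_copyCorr_decomposition (d k : ℕ) (hk : 0 < k)
    (X : Matrix (Fin d × Fin d) (Fin d × Fin d) ℂ)
    (hX : X ∈ dualCone {ρ : Matrix (Fin d × Fin d) (Fin d × Fin d) ℂ |
      IsState ρ ∧ CopyCorrKUndistillable (Fin d) k hk ρ}) :
    ∃ Y Q : Matrix ((Fin k → Fin d) × (Fin k → Fin d))
        ((Fin k → Fin d) × (Fin k → Fin d)) ℂ,
      Y ∈ dualCone {ω : Matrix ((Fin k → Fin d) × (Fin k → Fin d))
          ((Fin k → Fin d) × (Fin k → Fin d)) ℂ |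
        IsState ω ∧ SingleCopyUndistillable ω} ∧
      Q ∈ dualCone {ω : Matrix ((Fin k → Fin d) × (Fin k → Fin d))
          ((Fin k → Fin d) × (Fin k → Fin d)) ℂ |
        IsState ω ∧ PermSymmetric ω} ∧
      firstFactorOp k hk X = Y + Q := by
  set Z := firstFactorOp k hk X
  have hZ : Z.IsHermitian := hX.1.firstFactorOp hk
  refine ⟨symmetrize Z, Z - symmetrize Z, ⟨hZ.symmetrize, ?_⟩, ⟨hZ.sub hZ.symmetrize, ?_⟩,
    (add_sub_cancel _ _).symm⟩
  · rintro ω ⟨hω, hund⟩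
    rw [trace_symmetrize_mul, trace_firstFactorOp_mul]
    exact hX.2 _ ⟨hω.symmetrize.reduceAt _, symmetrize ω, hω.symmetrize,
      permSymmetric_symmetrize ω, hund.symmetrize, rfl⟩
  · rintro τ ⟨-, hτ⟩
    rw [Matrix.sub_mul, trace_sub, trace_symmetrize_mul, symmetrize_eq_self hτ, sub_self,
      Complex.zero_re]
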